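/- arXiv:2310.20653 — 5 statements merged into one kernel-verified Lean document; each statement's English description precedes it below -/
import Mathlib

section
/- Let N ≥ 1, let M : (ZMod N) → ℝ be strictly positive, let ρ : (ZMod N) → ℝ be nonnegative, and let μ > 0. Suppose h : (ZMod N) → ℝ satisfies for all i: h(i) = μ·(√(M(i)·M(i+1))·(h(i+1)/√M(i+1) − h(i)/√M(i)) + √(M(i−1)·M(i))·(h(i−1)/√M(i−1) − h(i)/√M(i))) + ρ(i)/√M(i). Then h(i) ≥ 0 for all i. -/
theorem stmt_5 (N : ℕ) [NeZero N] (M ρ : ZMod N → ℝ) (hM : ∀ i, 0 < M i)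
    (hρ : ∀ i, 0 ≤ ρ i) (μ : ℝ) (hμ : 0 < μ) (h : ZMod N → ℝ)
    (hh : ∀ i, h i =
      μ * (Real.sqrt (M i * M (i + 1)) *
            (h (i + 1) / Real.sqrt (M (i + 1)) - h i / Real.sqrt (M i)) +
          Real.sqrt (M (i - 1) * M i) *
            (h (i - 1) / Real.sqrt (M (i - 1)) - h i / Real.sqrt (M i))) +
        ρ i / Real.sqrt (M i)) :
    ∀ i, 0 ≤ h i := by
  set g : ZMod N → ℝ := fun i => h i / Real.sqrt (M i) with hg
  have hMs : ∀ i, 0 < Real.sqrt (M i) := fun i => Real.sqrt_pos.mpr (hM i)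
  obtain ⟨i0, hi0⟩ := Finite.exists_min g
  have hmin : 0 ≤ h i0 := by
    have h1 : 0 ≤ g (i0 + 1) - g i0 := sub_nonneg.mpr (hi0 _)
    have h2 : 0 ≤ g (i0 - 1) - g i0 := sub_nonneg.mpr (hi0 _)
    rw [hh i0]
    have hρ0 : 0 ≤ ρ i0 / Real.sqrt (M i0) := div_nonneg (hρ i0) (hMs i0).le
    positivity
  intro i
  have : 0 ≤ g i := le_trans (div_nonneg hmin (hMs i0).le) (hi0 i)
  have := mul_nonneg this (hMs i).le
  rwa [hg, div_mul_cancel₀] at this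
  exact (hMs i).ne'
end

section
/- Let N ≥ 1 and μ > 0. Suppose c* : (ZMod N) → ℝ satisfies c*(i) = μ·(c*(i+1) − 2c*(i) + c*(i−1)) + g(i) for all i, where g : (ZMod N) → ℝ is nonnegative. Then c*(i) ≥ 0 for all i. -/
theorem stmt_6 (N : ℕ) [NeZero N] (μ : ℝ) (hμ : 0 < μ) (g cstar : ZMod N → ℝ)
    (hg : ∀ i, 0 ≤ g i)
    (hc : ∀ i, cstar i = μ * (cstar (i + 1) - 2 * cstar i + cstar (i - 1)) + g i) :
    ∀ i, 0 ≤ cstar i := by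
  obtain ⟨i0, hmin⟩ := Finite.exists_min cstar
  have h0 : 0 ≤ cstar i0 := by
    have h := hc i0
    nlinarith [hmin (i0 + 1), hmin (i0 - 1), hg i0]
  exact fun i => le_trans h0 (hmin i)
end

section
/- Let ε, μ_x, μ_y > 0 with ε ≥ max(μ_x, μ_y), and let N ≥ 1. Suppose cⁿ, ρⁿ : (ZMod N)×(ZMod N) → ℝ are nonnegative and c^{n+1/2} satisfies for all (i,j): ε·c^{n+1/2}(i,j) = (μ_x/2)·(c^{n+1/2}(i−1,j) − 2c^{n+1/2}(i,j) + c^{n+1/2}(i+1,j)) + (μ_y/2)·cⁿ(i,j−1) + (ε − μ_y)·cⁿ(i,j) + (μ_y/2)·cⁿ(i,j+1) + (Δt/2)·ρⁿ(i,j) with Δt ≥ 0. Then c^{n+1/2}(i,j) ≥ 0 for all (i,j). -/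
theorem stmt_14 (ε μx μy Δt : ℝ) (hε : 0 < ε) (hμx : 0 < μx) (hμy : 0 < μy)
    (hmax : max μx μy ≤ ε) (hΔt : 0 ≤ Δt) (N : ℕ) [NeZero N]
    (cn ρn ch : ZMod N → ZMod N → ℝ)
    (hcn : ∀ i j, 0 ≤ cn i j) (hρn : ∀ i j, 0 ≤ ρn i j)
    (hch : ∀ i j, ε * ch i j =
      μx / 2 * (ch (i - 1) j - 2 * ch i j + ch (i + 1) j) +
        μy / 2 * cn i (j - 1) + (ε - μy) * cn i j + μy / 2 * cn i (j + 1) +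
        Δt / 2 * ρn i j) :
    ∀ i j, 0 ≤ ch i j := by
  intro i j
  obtain ⟨i0, hi0⟩ := Finite.exists_min (fun i => ch i j)
  have hy : μy ≤ ε := le_trans (le_max_right μx μy) hmax
  have h := hch i0 j
  have h1 := hi0 (i0 - 1)
  have h2 := hi0 (i0 + 1)
  have key : 0 ≤ ch i0 j := by
    nlinarith [hcn i0 (j - 1), hcn i0 j, hcn i0 (j + 1), hρn i0 j,
      mul_nonneg hΔt (hρn i0 j), mul_nonneg (sub_nonneg.2 hy) (hcn i0 j)]
  exact le_trans key (hi0 i)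
end

section
/- Let N ≥ 1, M : (ZMod N) → ℝ strictly positive, μ_y > 0, and suppose for all i: 1 − (μ_y/2)·(√M(i,j−1) + √M(i,j+1))/√M(i,j) ≥ 0 for all (i,j) in (ZMod N)². If ρⁿ ≥ 0 on the grid and ρ^{n+1/2} satisfies the split equation ρ^{n+1/2}(i,j) = (μ_x/2)·[√(M(i−1,j)M(i,j))·(ρ^{n+1/2}(i−1,j)/M(i−1,j) − ρ^{n+1/2}(i,j)/M(i,j)) + √(M(i+1,j)M(i,j))·(ρ^{n+1/2}(i+1,j)/M(i+1,j) − ρ^{n+1/2}(i,j)/M(i,j))] + [1 − (μ_y/2)(√M(i,j−1)+√M(i,j+1))/√M(i,j)]·ρⁿ(i,j) + (μ_y √M(i,j)/(2√M(i,j−1)))·ρⁿ(i,j−1) + (μ_y √M(i,j)/(2√M(i,j+1)))·ρⁿ(i,j+1), then ρ^{n+1/2}(i,j) ≥ 0 for all (i,j). -/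
theorem stmt_15 (N : ℕ) [NeZero N] (M : ZMod N → ZMod N → ℝ) (hM : ∀ i j, 0 < M i j)
    (μx μy : ℝ) (hμx : 0 < μx) (hμy : 0 < μy)
    (hcond : ∀ i j, 0 ≤ 1 - μy / 2 *
      ((Real.sqrt (M i (j - 1)) + Real.sqrt (M i (j + 1))) / Real.sqrt (M i j)))
    (ρn ρh : ZMod N → ZMod N → ℝ) (hρn : ∀ i j, 0 ≤ ρn i j)
    (hρh : ∀ i j, ρh i j =
      μx / 2 * (Real.sqrt (M (i - 1) j * M i j) *
            (ρh (i - 1) j / M (i - 1) j - ρh i j / M i j) +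
          Real.sqrt (M (i + 1) j * M i j) *
            (ρh (i + 1) j / M (i + 1) j - ρh i j / M i j)) +
        (1 - μy / 2 *
          ((Real.sqrt (M i (j - 1)) + Real.sqrt (M i (j + 1))) / Real.sqrt (M i j))) *
          ρn i j +
        μy * Real.sqrt (M i j) / (2 * Real.sqrt (M i (j - 1))) * ρn i (j - 1) +
        μy * Real.sqrt (M i j) / (2 * Real.sqrt (M i (j + 1))) * ρn i (j + 1)) :
    ∀ i j, 0 ≤ ρh i j := by
  set g : ZMod N → ZMod N → ℝ := fun i j => ρh i j / M i j with hg
  obtain ⟨⟨a, b⟩, -, hmin⟩ := Finset.exists_min_image (Finset.univ : Finset (ZMod N × ZMod N))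
    (fun p => g p.1 p.2) ⟨(0, 0), Finset.mem_univ _⟩
  have hmin' : ∀ i j, g a b ≤ g i j := fun i j => hmin (i, j) (Finset.mem_univ _)
  have hab : 0 ≤ ρh a b := by
    rw [hρh a b]
    have h1 : 0 ≤ Real.sqrt (M (a - 1) b * M a b) * (g (a - 1) b - g a b) :=
      mul_nonneg (Real.sqrt_nonneg _) (sub_nonneg.2 (hmin' _ _))
    have h2 : 0 ≤ Real.sqrt (M (a + 1) b * M a b) * (g (a + 1) b - g a b) :=
      mul_nonneg (Real.sqrt_nonneg _) (sub_nonneg.2 (hmin' _ _))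
    have h3 := hcond a b
    refine add_nonneg (add_nonneg (add_nonneg ?_ ?_) ?_) ?_
    · exact mul_nonneg (by positivity) (add_nonneg h1 h2)
    · exact mul_nonneg h3 (hρn a b)
    · exact mul_nonneg (by positivity) (hρn _ _)
    · exact mul_nonneg (by positivity) (hρn _ _)
  have habg : 0 ≤ g a b := div_nonneg hab (hM a b).le
  intro i j
  have := le_trans habg (hmin' i j)
  simpa [hg] using (div_nonneg_iff.1 this).resolve_right
    (fun h => absurd (hM i j) (not_lt.2 h.2)) |>.1
end

section
/- Let N ≥ 1, let ρⁿ, ρ^{n+1}, cⁿ, c^{n+1} : (ZMod N) → ℝ with ρⁿ, ρ^{n+1} strictly positive. Define the discrete energy E(ρ,c) = ∑_i [ρ(i) log ρ(i) − ρ(i) − ρ(i)c(i)] + (1/2)∑_i |c(i+1) − c(i)|². Then E(ρ^{n+1}, c^{n+1}) − E(ρⁿ, cⁿ) ≤ ∑_i (ρ^{n+1}(i) − ρⁿ(i))·(log ρ^{n+1}(i) − c^{n+1}(i)) − ∑_i ρⁿ(i)·(c^{n+1}(i) − cⁿ(i)) + ∑_i (c^{n+1}(i+1) − c^{n+1}(i))·[(c^{n+1}(i+1)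 − c^{n+1}(i)) − (cⁿ(i+1) − cⁿ(i))]. -/
theorem stmt_17 (N : ℕ) [NeZero N] (ρn ρn1 cn cn1 : ZMod N → ℝ)
    (hρn : ∀ i, 0 < ρn i) (hρn1 : ∀ i, 0 < ρn1 i)
    (E : (ZMod N → ℝ) → (ZMod N → ℝ) → ℝ)
    (hE : ∀ ρ c, E ρ c =
      ∑ i, (ρ i * Real.log (ρ i) - ρ i - ρ i * c i) +
        (1 / 2) * ∑ i, |c (i + 1) - c i| ^ 2) :
    E ρn1 cn1 - E ρn cn ≤
      ∑ i, (ρn1 i - ρn i) * (Real.log (ρn1 i) - cn1 i) -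
        ∑ i, ρn i * (cn1 i - cn i) +
        ∑ i, (cn1 (i + 1) - cn1 i) * ((cn1 (i + 1) - cn1 i) - (cn (i + 1) - cn i)) := by
  have main : ∀ i : ZMod N,
      (ρn1 i * Real.log (ρn1 i) - ρn1 i - ρn1 i * cn1 i) -
        (ρn i * Real.log (ρn i) - ρn i - ρn i * cn i) +
        (1 / 2) * (|cn1 (i + 1) - cn1 i| ^ 2 - |cn (i + 1) - cn i| ^ 2) ≤
      (ρn1 i - ρn i) * (Real.log (ρn1 i) - cn1 i) - ρn i * (cn1 i - cn i) +
        (cn1 (i + 1) - cn1 i) * ((cn1 (i + 1) - cn1 i) - (cn (i + 1) - cn i)) := by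
    intro i
    have hlog : ρn i * Real.log (ρn1 i) - ρn i * Real.log (ρn i) ≤ ρn1 i - ρn i := by
      have h := Real.log_le_sub_one_of_pos (div_pos (hρn1 i) (hρn i))
      rw [Real.log_div (ne_of_gt (hρn1 i)) (ne_of_gt (hρn i))] at h
      have hb := hρn i
      have := mul_le_mul_of_nonneg_left h (le_of_lt hb)
      calc ρn i * Real.log (ρn1 i) - ρn i * Real.log (ρn i)
          = ρn i * (Real.log (ρn1 i) - Real.log (ρn i)) := by ring
        _ ≤ ρn i * (ρn1 i / ρn i - 1) := this
        _ = ρn1 i - ρn i := by field_simp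
    have hsq1 : |cn1 (i + 1) - cn1 i| ^ 2 = (cn1 (i + 1) - cn1 i) ^ 2 := sq_abs _
    have hsq2 : |cn (i + 1) - cn i| ^ 2 = (cn (i + 1) - cn i) ^ 2 := sq_abs _
    rw [hsq1, hsq2]
    nlinarith [sq_nonneg ((cn1 (i + 1) - cn1 i) - (cn (i + 1) - cn i))]
  have hsum := Finset.sum_le_sum (fun i (_ : i ∈ Finset.univ) => main i)
  rw [hE, hE]
  calc (∑ i, (ρn1 i * Real.log (ρn1 i) - ρn1 i - ρn1 i * cn1 i) +
        (1 / 2) * ∑ i, |cn1 (i + 1) - cn1 i| ^ 2) -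
       (∑ i, (ρn i * Real.log (ρn i) - ρn i - ρn i * cn i) +
        (1 / 2) * ∑ i, |cn (i + 1) - cn i| ^ 2)
      = ∑ i : ZMod N, ((ρn1 i * Real.log (ρn1 i) - ρn1 i - ρn1 i * cn1 i) -
        (ρn i * Real.log (ρn i) - ρn i - ρn i * cn i) +
        (1 / 2) * (|cn1 (i + 1) - cn1 i| ^ 2 - |cn (i + 1) - cn i| ^ 2)) := by
        simp only [mul_sub, Finset.sum_add_distrib, Finset.sum_sub_distrib, Finset.mul_sum]
        ring
    _ ≤ ∑ i : ZMod N, ((ρn1 i - ρn i) * (Real.log (ρn1 i) - cn1 i) - ρn i * (cn1 i - cn i) +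
        (cn1 (i + 1) - cn1 i) * ((cn1 (i + 1) - cn1 i) - (cn (i + 1) - cn i))) := hsum
    _ = ∑ i, (ρn1 i - ρn i) * (Real.log (ρn1 i) - cn1 i) -
        ∑ i, ρn i * (cn1 i - cn i) +
        ∑ i, (cn1 (i + 1) - cn1 i) * ((cn1 (i + 1) - cn1 i) - (cn (i + 1) - cn i)) := by
        simp only [Finset.sum_add_distrib, Finset.sum_sub_distrib]
end
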